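/- Let G be a graph, H a graph with root vertex v ∈ V(H), and let f be a γ_I(G∘_v H)-function. If B_f = {x ∈ V(G) : ω(f_x) = γ_I(H) − 1} is nonempty, then γ_I(H − {v}) = γ_I(H) − 1. -/

import Mathlib

/-!
If `ω(f_x) < γ_I(H)`, then `f_x` is not an IDF of `H`. Every vertex of `H_x` other than the root
has all its neighbours inside `H_x`, so the Italian condition can only fail at the root, which
forces `f(x, v) = 0`. Then `f_x` restricted to `H − v` is an IDF of weight `γ_I(H) − 1`.
Conversely, an IDF of `H − v` extended by the value `1` at `v` is an IDF of `H`.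
-/

open Finset

open scoped Classical

/-- An Italian dominating function on a finite simple graph: values in {0,1,2} and
every vertex with value 0 has neighbour values summing to at least 2. -/
noncomputable def IsIDF {α : Type*} [Fintype α] (G : SimpleGraph α) (f : α → ℕ) : Prop :=
  (∀ u, f u ≤ 2) ∧
    ∀ u, f u = 0 → 2 ≤ ∑ w ∈ Finset.univ.filter (fun w => G.Adj u w), f w

/-- The Italian domination number γ_I(G). -/
noncomputable def italianNumber {α : Type*} [Fintype α] (G : SimpleGraph α) : ℕ :=
  sInf {n | ∃ f : α → ℕ, IsIDF G f ∧ ∑ u, f u = n}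

/-- A γ_I(G)-function: an IDF on G of minimum weight. -/
noncomputable def IsMinIDF {α : Type*} [Fintype α] (G : SimpleGraph α) (f : α → ℕ) : Prop :=
  IsIDF G f ∧ ∑ u, f u = italianNumber G

/-- D is a dominating set of G. -/
def IsDomSet {α : Type*} (G : SimpleGraph α) (D : Set α) : Prop :=
  ∀ u ∉ D, ∃ w ∈ D, G.Adj u w

/-- The domination number γ(G). -/
noncomputable def dominationNumber {α : Type*} [Fintype α] (G : SimpleGraph α) : ℕ :=
  sInf {n | ∃ D : Finset α, IsDomSet G ↑D ∧ D.card = n}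

/-- The degree of a vertex. -/
noncomputable def deg {α : Type*} [Fintype α] (G : SimpleGraph α) (u : α) : ℕ :=
  (Finset.univ.filter (fun w => G.Adj u w)).card

/-- The rooted product G∘_v H: one copy of H for each vertex of G, the root v of the
x-th copy being identified with the vertex x of G. The pair (x, y) is the vertex y of
the x-th copy of H; in particular (x, v) is the vertex x of G. -/
def rootedProd {α β : Type*} (G : SimpleGraph α) (H : SimpleGraph β) (v : β) :
    SimpleGraph (α × β) where
  Adj p q := (p.1 = q.1 ∧ H.Adj p.2 q.2) ∨ (p.2 = v ∧ q.2 = v ∧ G.Adj p.1 q.1)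
  symm := by
    constructor
    rintro ⟨x, y⟩ ⟨x', y'⟩ (⟨h1, h2⟩ | ⟨h1, h2, h3⟩)
    · exact Or.inl ⟨h1.symm, h2.symm⟩
    · exact Or.inr ⟨h2, h1, h3.symm⟩
  loopless := by
    constructor
    rintro ⟨x, y⟩ (⟨_, h⟩ | ⟨_, _, h⟩)
    · exact H.loopless.irrefl _ h
    · exact G.loopless.irrefl _ h

/-- The weight ω(f_x) of the restriction of f to the copy H_x. -/
def copyWeight {α β : Type*} [Fintype β] (f : α × β → ℕ) (x : α) : ℕ :=
  ∑ y, f (x, y)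

/-- The graph H − {v} obtained from H by deleting the vertex v. -/
def deleteVertex {β : Type*} (H : SimpleGraph β) (v : β) : SimpleGraph {w : β // w ≠ v} :=
  SimpleGraph.induce {w : β | w ≠ v} H

lemma IsIDF.italianNumber_le {α : Type*} [Fintype α] {G : SimpleGraph α} {f : α → ℕ}
    (hf : IsIDF G f) : italianNumber G ≤ ∑ u, f u :=
  Nat.sInf_le ⟨f, hf, rfl⟩

lemma exists_isMinIDF {α : Type*} [Fintype α] (G : SimpleGraph α) : ∃ f, IsMinIDF G f :=
  Nat.sInf_mem (s := {n | ∃ f : α → ℕ, IsIDF G f ∧ ∑ u, f u = n})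
    ⟨_, fun _ => 2, ⟨fun _ => le_rfl, fun _ h => absurd h two_ne_zero⟩, rfl⟩

lemma italianNumber_pos {α : Type*} [Fintype α] [Nonempty α] (G : SimpleGraph α) :
    0 < italianNumber G := by
  obtain ⟨f, ⟨-, hdom⟩, hw⟩ := exists_isMinIDF G
  by_contra! h0
  have hzero : ∀ u, f u = 0 := fun u =>
    sum_eq_zero_iff.mp (hw.trans (Nat.le_zero.mp h0)) u (mem_univ u)
  obtain ⟨u⟩ := ‹Nonempty α›
  have := hdom u (hzero u)
  simp only [hzero, sum_const_zero] at this
  omega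

lemma sum_adj_eq_sum_deleteVertex_adj_add {β : Type*} [Fintype β] (H : SimpleGraph β) (v : β)
    (w : {w : β // w ≠ v}) (g : β → ℕ) :
    ∑ b ∈ univ.filter (fun b => H.Adj w b), g b =
      ∑ w' ∈ univ.filter (fun w' => (deleteVertex H v).Adj w w'), g w' +
        if H.Adj w v then g v else 0 := by
  rw [sum_filter, sum_filter, Fintype.sum_eq_add_sum_subtype_ne _ v, add_comm]
  rfl

lemma isIDF_deleteVertex_of_root_eq_zero {β : Type*} [Fintype β] {H : SimpleGraph β} {v : β}
    {g : β → ℕ} (hle : ∀ b, g b ≤ 2)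
    (hdom : ∀ b, b ≠ v → g b = 0 → 2 ≤ ∑ b' ∈ univ.filter (fun b' => H.Adj b b'), g b')
    (hv : g v = 0) :
    IsIDF (deleteVertex H v) (fun w => g w) := by
  refine ⟨fun w => hle w, fun w hw => ?_⟩
  have := hdom w w.2 hw
  rwa [sum_adj_eq_sum_deleteVertex_adj_add H v w, hv, ite_self, add_zero] at this

lemma isIDF_extend_root_one {β : Type*} [Fintype β] {H : SimpleGraph β} {v : β}
    {g : {w : β // w ≠ v} → ℕ} (hg : IsIDF (deleteVertex H v) g) :
    IsIDF H (fun b => if hb : b = v then 1 else g ⟨b, hb⟩) := by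
  set g' : β → ℕ := fun b => if hb : b = v then 1 else g ⟨b, hb⟩
  have hg'_sub : ∀ w : {w : β // w ≠ v}, g' w = g w := fun w => dif_neg w.2
  refine ⟨fun b => ?_, fun b hb => ?_⟩
  · by_cases hbv : b = v
    · simp [g', hbv]
    · exact (hg'_sub ⟨b, hbv⟩).trans_le (hg.1 _)
  · have hbv : b ≠ v := by rintro rfl; simp [g'] at hb
    have := hg.2 ⟨b, hbv⟩ (by rwa [← hg'_sub])
    calc 2 ≤ ∑ w' ∈ univ.filter (fun w' => (deleteVertex H v).Adj ⟨b, hbv⟩ w'), g' w' := by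
          simpa only [hg'_sub] using this
      _ ≤ ∑ b' ∈ univ.filter (fun b' => H.Adj b b'), g' b' := by
          rw [sum_adj_eq_sum_deleteVertex_adj_add H v ⟨b, hbv⟩ g']
          exact Nat.le_add_right _ _

lemma italianNumber_le_italianNumber_deleteVertex_add_one {β : Type*} [Fintype β]
    (H : SimpleGraph β) (v : β) :
    italianNumber H ≤ italianNumber (deleteVertex H v) + 1 := by
  obtain ⟨g, hg, hw⟩ := exists_isMinIDF (deleteVertex H v)
  calc italianNumber H ≤ ∑ b, if hb : b = v then 1 else g ⟨b, hb⟩ :=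
        (isIDF_extend_root_one hg).italianNumber_le
    _ = italianNumber (deleteVertex H v) + 1 := by
        rw [Fintype.sum_eq_add_sum_subtype_ne _ v, dif_pos rfl, ← hw, add_comm]
        congr 1
        exact sum_congr rfl fun w _ => dif_neg w.2

lemma rootedProd_sum_adj_of_ne_root {α β : Type*} [Fintype α] [Fintype β]
    (G : SimpleGraph α) (H : SimpleGraph β) {v : β} (f : α × β → ℕ) (x : α) {u : β}
    (hu : u ≠ v) :
    ∑ p ∈ univ.filter (fun p => (rootedProd G H v).Adj (x, u) p), f p
      = ∑ b ∈ univ.filter (fun b => H.Adj u b), f (x, b) := by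
  have hnbrs : univ.filter (fun p => (rootedProd G H v).Adj (x, u) p)
      = {x} ×ˢ univ.filter (fun b => H.Adj u b) := by
    ext ⟨a, b⟩
    simp only [rootedProd, mem_filter, mem_univ, true_and, mem_product, mem_singleton, hu,
      false_and, or_false]
    exact ⟨fun h => ⟨h.1.symm, h.2⟩, fun h => ⟨h.1.symm, h.2⟩⟩
  rw [hnbrs, sum_product, sum_singleton]

section RootedProduct

variable {α β : Type*} [Fintype α] [Fintype β] {G : SimpleGraph α} {H : SimpleGraph β} {v : β}
  {f : α × β → ℕ}

lemma IsIDF.copy_dom_of_ne_root (hf : IsIDF (rootedProd G H v) f) (x : α) {u : β}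
    (hu : u ≠ v) (h0 : f (x, u) = 0) :
    2 ≤ ∑ b ∈ univ.filter (fun b => H.Adj u b), f (x, b) :=
  rootedProd_sum_adj_of_ne_root G H f x hu ▸ hf.2 (x, u) h0

lemma IsIDF.root_eq_zero_of_copyWeight_lt (hf : IsIDF (rootedProd G H v) f) {x : α}
    (hx : copyWeight f x < italianNumber H) : f (x, v) = 0 := by
  by_contra hv
  have hcopy : IsIDF H (fun b => f (x, b)) :=
    ⟨fun b => hf.1 (x, b), fun u hu => hf.copy_dom_of_ne_root x (by rintro rfl; exact hv hu) hu⟩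
  exact absurd hcopy.italianNumber_le (not_le.mpr hx)

lemma IsIDF.italianNumber_deleteVertex_le_copyWeight (hf : IsIDF (rootedProd G H v) f) {x : α}
    (hv : f (x, v) = 0) : italianNumber (deleteVertex H v) ≤ copyWeight f x := by
  have hres := isIDF_deleteVertex_of_root_eq_zero (fun b => hf.1 (x, b))
    (fun _ hb h0 => hf.copy_dom_of_ne_root x hb h0) hv
  calc italianNumber (deleteVertex H v) ≤ ∑ w : {w : β // w ≠ v}, f (x, w) :=
        hres.italianNumber_le
    _ = copyWeight f x := by
        rw [copyWeight, Fintype.sum_eq_add_sum_subtype_ne _ v, hv, zero_add]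

end RootedProduct

theorem stmt11_general {α β : Type*} [Fintype α] [Fintype β]
    (G : SimpleGraph α) (H : SimpleGraph β) (v : β)
    (f : α × β → ℕ) (hf : IsMinIDF (rootedProd G H v) f)
    (hB : ∃ x : α, copyWeight f x = italianNumber H - 1) :
    italianNumber (deleteVertex H v) = italianNumber H - 1 := by
  obtain ⟨x, hx⟩ := hB
  have : Nonempty β := ⟨v⟩
  have hpos := italianNumber_pos H
  have hv : f (x, v) = 0 := hf.1.root_eq_zero_of_copyWeight_lt (by omega)
  have hle := hf.1.italianNumber_deleteVertex_le_copyWeight hv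
  have hge := italianNumber_le_italianNumber_deleteVertex_add_one H v
  omega

/-- Lemma 7: if f is a γ_I(G∘_v H)-function with B_f ≠ ∅, then
γ_I(H − {v}) = γ_I(H) − 1. -/
theorem stmt11 {α β : Type*} [Fintype α] [Nonempty α] [Fintype β]
    (G : SimpleGraph α) (H : SimpleGraph β) (v : β)
    (f : α × β → ℕ) (hf : IsMinIDF (rootedProd G H v) f)
    (hB : ∃ x : α, copyWeight f x = italianNumber H - 1) :
    italianNumber (deleteVertex H v) = italianNumber H - 1 :=
  stmt11_general G H v f hf hB
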